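/- Let M be the 4×4 real symmetric matrix with rows (1/2, 0, 2/3, 0), (0, 1/2, 0, 1/4), (2/3, 0, 1/3, 0), (0, 1/4, 0, 1/4), so that with n_A = n_B = 1 its blocks are M_AA = diag(1/2, 1/2), M_AB = M_BA = diag(2/3, 1/4), M_BB = diag(1/3, 1/4), and ‖M_AB‖_op = 2/3, |M_AB| = |M_BA| = diag(2/3, 1/4). Then: (i) every complex eigenvalue of J_1·(M_AA + ‖M_AB‖_op I_2) = J_1·diag(7/6, 7/6) has modulus 7/6 > 1, so the hypothesis of the first (operator-norm) separability criterion fails for M; (ii) every complex eigenvalue of J_1·(M_AA + |M_AB|) = J_1·diag(7/6, 3/4) has modulus √(7/8) < 1, and every complex eigenvalue of J_1·(M_BB + |M_BA|) = J_1·diag(1, 1/2) has modulus 1/√2 < 1, so the hypothesis of the second (modulus) separability criterion holds for M. Hence the first criterion is sufficient but not necessary. -/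

import Mathlib

open Matrix

noncomputable section

/-- The standard `2×2` symplectic matrix `J_1 = [[0, 1], [-1, 0]]`. -/
def J1 : Matrix (Fin 2) (Fin 2) ℝ := !![0, 1; -1, 0]

/-- `μ ∈ ℂ` is an eigenvalue of the real `2×2` matrix `N`. -/
def IsEigenvalue2 (N : Matrix (Fin 2) (Fin 2) ℝ) (μ : ℂ) : Prop :=
  (N.map Complex.ofReal - μ • 1).det = 0

/-- The block `M_AA = diag(1/2, 1/2)` of the example. -/
def exMAA : Matrix (Fin 2) (Fin 2) ℝ := !![1/2, 0; 0, 1/2]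

/-- The block `M_AB = M_BA = diag(2/3, 1/4)` of the example. -/
def exMAB : Matrix (Fin 2) (Fin 2) ℝ := !![2/3, 0; 0, 1/4]

/-- The block `M_BB = diag(1/3, 1/4)` of the example. -/
def exMBB : Matrix (Fin 2) (Fin 2) ℝ := !![1/3, 0; 0, 1/4]


lemma eig_diag (a b : ℝ) (μ : ℂ) (h : IsEigenvalue2 (J1 * !![a, 0; 0, b]) μ) :
    μ ^ 2 = -((a : ℂ) * b) := by
  unfold IsEigenvalue2 J1 at h
  rw [Matrix.det_fin_two] at h
  simp [Matrix.mul_fin_two, Matrix.map_apply, Matrix.one_apply] at h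
  linear_combination h

lemma abs_of_sq_neg (c : ℝ) (hc : 0 ≤ c) (μ : ℂ) (h : μ ^ 2 = -(c : ℂ)) :
    ‖μ‖ = Real.sqrt c := by
  have h2 : ‖μ‖ ^ 2 = c := by
    have := congrArg (‖·‖) h
    rw [norm_pow] at this
    simpa [Complex.norm_real, abs_of_nonneg hc] using this
  rw [← h2, Real.sqrt_sq (norm_nonneg μ)]

lemma psd_exMAB : exMAB.PosSemidef := by
  have h : exMAB = Matrix.diagonal ![2/3, 1/4] := by
    ext i j; fin_cases i <;> fin_cases j <;> simp [exMAB, Matrix.diagonal]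
  rw [h]
  apply Matrix.posSemidef_diagonal_iff.mpr
  intro i; fin_cases i <;> norm_num

lemma sq_exMAB : exMAB * exMAB = exMAB * exMABᵀ := by
  rw [show exMABᵀ = exMAB from by ext i j; fin_cases i <;> fin_cases j <;> rfl]

lemma lub_exMAB : IsLUB {c : ℝ | ∃ x : Fin 2 → ℝ, x ⬝ᵥ x = 1 ∧
    c = Real.sqrt ((exMAB *ᵥ x) ⬝ᵥ (exMAB *ᵥ x))} (2/3) := by
  constructor
  · rintro c ⟨x, hx, rfl⟩
    have hdot : (exMAB *ᵥ x) ⬝ᵥ (exMAB *ᵥ x)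
        = (2/3 * x 0) ^ 2 + (1/4 * x 1) ^ 2 := by
      simp [exMAB, Matrix.mulVec, dotProduct, Fin.sum_univ_two]
      ring
    have hx' : x 0 * x 0 + x 1 * x 1 = 1 := by
      simpa [dotProduct, Fin.sum_univ_two] using hx
    rw [hdot]
    have hle : (2/3 * x 0) ^ 2 + (1/4 * x 1) ^ 2 ≤ (2/3 : ℝ) ^ 2 := by nlinarith
    calc Real.sqrt ((2/3 * x 0) ^ 2 + (1/4 * x 1) ^ 2)
        ≤ Real.sqrt ((2/3 : ℝ) ^ 2) := Real.sqrt_le_sqrt hle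
      _ = 2/3 := by rw [Real.sqrt_sq]; norm_num
  · intro b hb
    have : (2/3 : ℝ) ∈ {c : ℝ | ∃ x : Fin 2 → ℝ, x ⬝ᵥ x = 1 ∧
        c = Real.sqrt ((exMAB *ᵥ x) ⬝ᵥ (exMAB *ᵥ x))} := by
      refine ⟨![1, 0], ?_, ?_⟩
      · simp [dotProduct, Fin.sum_univ_two]
      · have : (exMAB *ᵥ ![1, 0]) ⬝ᵥ (exMAB *ᵥ ![1, 0]) = (4/9 : ℝ) := by
          simp [exMAB, Matrix.mulVec, dotProduct, Fin.sum_univ_two]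
          norm_num
        rw [this]
        rw [show (4/9 : ℝ) = (2/3)^2 by norm_num, Real.sqrt_sq]; norm_num
    exact hb this


/-- for the example `M` with blocks `M_AA = diag(1/2, 1/2)`,
`M_AB = M_BA = diag(2/3, 1/4)`, `M_BB = diag(1/3, 1/4)`, one has `|M_AB| = diag(2/3, 1/4)`
(the positive semidefinite square root of `M_AB M_ABᵀ`) and `‖M_AB‖_op = 2/3`; moreover
(i) every complex eigenvalue of `J_1·(M_AA + ‖M_AB‖_op I_2)` has modulus `7/6 > 1`, so the
hypothesis of the first (operator-norm) separability criterion fails, while (ii) every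
complex eigenvalue of `J_1·(M_AA + |M_AB|)` has modulus `√(7/8) < 1` and every complex
eigenvalue of `J_1·(M_BB + |M_BA|)` has modulus `1/√2 < 1`, so the hypothesis of the
second (modulus) criterion holds.  Hence the first criterion is not necessary. -/
theorem statement18 :
    -- |M_AB| = diag(2/3, 1/4): it is PSD and squares to M_AB · M_ABᵀ
    (exMAB.PosSemidef ∧ exMAB * exMAB = exMAB * exMABᵀ) ∧
    -- ‖M_AB‖_op = 2/3
    IsLUB {c : ℝ | ∃ x : Fin 2 → ℝ, x ⬝ᵥ x = 1 ∧
        c = Real.sqrt ((exMAB *ᵥ x) ⬝ᵥ (exMAB *ᵥ x))} (2/3) ∧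
    -- (i) the first criterion fails for M
    ((∀ μ : ℂ, IsEigenvalue2 (J1 * (exMAA + (2/3 : ℝ) • 1)) μ → ‖μ‖ = 7/6) ∧
      (1 : ℝ) < 7/6 ∧
      ¬ (∀ μ : ℂ, IsEigenvalue2 (J1 * (exMAA + (2/3 : ℝ) • 1)) μ → ‖μ‖ ≤ 1)) ∧
    -- (ii) the second criterion holds for M
    ((∀ μ : ℂ, IsEigenvalue2 (J1 * (exMAA + exMAB)) μ → ‖μ‖ = Real.sqrt (7/8)) ∧
      Real.sqrt (7/8) < 1 ∧
      (∀ μ : ℂ, IsEigenvalue2 (J1 * (exMBB + exMAB)) μ → ‖μ‖ = Real.sqrt (1/2)) ∧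
      Real.sqrt (1/2) < 1) := by
  have hM1 : exMAA + (2/3 : ℝ) • 1 = !![7/6, 0; 0, 7/6] := by
    ext i j; fin_cases i <;> fin_cases j <;>
      simp [exMAA, Matrix.one_apply] <;> norm_num
  have hM2 : exMAA + exMAB = !![7/6, 0; 0, 3/4] := by
    ext i j; fin_cases i <;> fin_cases j <;> simp [exMAA, exMAB] <;> norm_num
  have hM3 : exMBB + exMAB = !![1, 0; 0, 1/2] := by
    ext i j; fin_cases i <;> fin_cases j <;> simp [exMBB, exMAB] <;> norm_num
  refine ⟨⟨psd_exMAB, sq_exMAB⟩, lub_exMAB, ⟨?_, by norm_num, ?_⟩, ?_, ?_, ?_, ?_⟩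
  · intro μ h
    rw [hM1] at h
    have := eig_diag _ _ _ h
    have := abs_of_sq_neg (7/6 * (7/6)) (by norm_num) μ (by push_cast at this ⊢; linear_combination this)
    rw [this, show (7/6 : ℝ) * (7/6) = (7/6)^2 by ring, Real.sqrt_sq (by norm_num)]
  · intro h
    have h2 : IsEigenvalue2 (J1 * (exMAA + (2/3 : ℝ) • 1)) ((7/6) * Complex.I) := by
      rw [hM1]
      unfold IsEigenvalue2 J1
      rw [Matrix.det_fin_two]
      simp [Matrix.mul_fin_two, Matrix.map_apply, Matrix.one_apply]
      ring_nf
      simp [Complex.I_sq]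
    have := h _ h2
    have habs : ‖(7/6 * Complex.I : ℂ)‖ = 7/6 := by
      rw [norm_mul, Complex.norm_I, mul_one,
        show ((7:ℂ)/6) = ((7/6:ℝ):ℂ) by norm_num, Complex.norm_real]
      norm_num
    rw [habs] at this
    norm_num at this
  · intro μ h
    rw [hM2] at h
    have h1 := eig_diag _ _ _ h
    have h2 := abs_of_sq_neg (7/6 * (3/4)) (by norm_num) μ (by push_cast at h1 ⊢; linear_combination h1)
    rw [h2]; norm_num
  · rw [show (7/8:ℝ) = 7/8 from rfl]
    have : Real.sqrt (7/8) < Real.sqrt 1 := by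
      apply Real.sqrt_lt_sqrt <;> norm_num
    simpa using this
  · intro μ h
    rw [hM3] at h
    have h1 := eig_diag _ _ _ h
    have h2 := abs_of_sq_neg (1 * (1/2)) (by norm_num) μ (by push_cast at h1 ⊢; linear_combination h1)
    rw [h2]; norm_num
  · have : Real.sqrt (1/2) < Real.sqrt 1 := by
      apply Real.sqrt_lt_sqrt <;> norm_num
    simpa using this
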